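/- Let R be a commutative ℚ-algebra, A an associative unital R-algebra, C a maximal commutative R-subalgebra of A, and M an A-bimodule symmetric over R. Then the set Def M := {polynomials Σ_p m_p t^p ∈ M[t] | m_p ∈ F^C_p M for all p} is stable under left and right multiplication by elements of Def A := {Σ_p a_p t^p ∈ A[t] | a_p ∈ F^C_p A for all p}; i.e., Def M is a Def A-sub-bimodule of M[t]. -/

import Mathlib

/-!
`ad_c` is a derivation of the action: `ad_c (a • m) = ad_c a • m + a • ad_c m`, and likewise for
the right action. Hence `ad_c^{n+1} (a • m)` is a sum of terms `ad_c^k a • ad_c^l m` with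
`k + l = n + 1`, and if `ad_c^{i+1} a = 0`, `ad_c^{j+1} m = 0` with `i + j = n`, every such term
has `k > i` or `l > j` and vanishes. So `a_i • m_j ∈ F^C_{i+j} M`, and summing over `i + j = p`
gives the coefficients of the products.
-/

variable {R A M : Type*} [CommRing R] [Algebra ℚ R] [Ring A] [Algebra R A]
  [AddCommGroup M] [Module A M] [Module Aᵐᵒᵖ M] [SMulCommClass A Aᵐᵒᵖ M]
  [Module R M] [IsScalarTower R A M] [IsScalarTower R Aᵐᵒᵖ M]

/-- `ad_a(m) = a·m − m·a` on the bimodule `M`. -/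
def adM (a : A) (m : M) : M := a • m - MulOpposite.op a • m

/-- `ad_c(a) = ca − ac` on the algebra `A`. -/
def adA (c a : A) : A := c * a - a * c

section Leibniz

variable {X Y Z : Type*} [AddCommMonoid X] [AddCommMonoid Y] [AddCommMonoid Z]

theorem iterate_map_eq_zero_of_leibniz (f : X →+ Y →+ Z) (D₁ : X → X) (D₂ : Y → Y)
    (D : Z →+ Z) (hD : ∀ x y, D (f x y) = f (D₁ x) y + f x (D₂ y)) {i j : ℕ} {x : X} {y : Y}
    (hx : D₁^[i + 1] x = 0) (hy : D₂^[j + 1] y = 0) : D^[i + j + 1] (f x y) = 0 := by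
  induction hn : i + j generalizing i j x y with
  | zero =>
    obtain ⟨rfl, rfl⟩ : i = 0 ∧ j = 0 := by omega
    simp_all
  | succ n ih =>
    rw [Function.iterate_succ_apply, hD, iterate_map_add]
    have hleft : D^[n + 1] (f (D₁ x) y) = 0 := by
      cases i with
      | zero => simp_all
      | succ i => exact ih (by rwa [← Function.iterate_succ_apply]) hy (by omega)
    have hright : D^[n + 1] (f x (D₂ y)) = 0 := by
      cases j with
      | zero => simp_all
      | succ j => exact ih hx (by rwa [← Function.iterate_succ_apply]) (by omega)
    rw [hleft, hright, add_zero]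

end Leibniz

def adMHom (c : A) : M →+ M :=
  AddMonoidHom.mk' (adM c) fun x y => by simp only [adM, smul_add]; abel

omit [SMulCommClass A Aᵐᵒᵖ M] in
@[simp]
theorem coe_adMHom (c : A) : ⇑(adMHom c : M →+ M) = adM c := rfl

theorem adM_smul (c a : A) (x : M) : adM c (a • x) = adA c a • x + a • adM c x := by
  simp only [adM, adA, smul_sub, sub_smul, mul_smul, smul_comm a (MulOpposite.op c) x]
  abel

theorem adM_op_smul (c a : A) (x : M) :
    adM c (MulOpposite.op a • x) =
      MulOpposite.op (adA c a) • x + MulOpposite.op a • adM c x := by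
  simp only [adM, adA, smul_sub, MulOpposite.op_sub, sub_smul, MulOpposite.op_mul, mul_smul,
    smul_comm c (MulOpposite.op a) x]
  abel

theorem iterate_adM_smul_eq_zero {c a : A} {x : M} {i j : ℕ}
    (ha : (adA c)^[i + 1] a = 0) (hx : (adM c)^[j + 1] x = 0) :
    (adM c)^[i + j + 1] (a • x) = 0 := by
  simpa using iterate_map_eq_zero_of_leibniz (smulAddHom A M) (adA c) (adM c) (adMHom c)
    (adM_smul c) ha hx

theorem iterate_adM_op_smul_eq_zero {c a : A} {x : M} {i j : ℕ}
    (ha : (adA c)^[i + 1] a = 0) (hx : (adM c)^[j + 1] x = 0) :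
    (adM c)^[i + j + 1] (MulOpposite.op a • x) = 0 := by
  simpa using iterate_map_eq_zero_of_leibniz
    ((smulAddHom Aᵐᵒᵖ M).comp MulOpposite.opAddEquiv.toAddMonoidHom) (adA c) (adM c) (adMHom c)
    (adM_op_smul c) ha hx

theorem rees_deformation_sub_bimodule_general (C : Subalgebra R A)
    (a : ℕ → A) (ha : ∀ p : ℕ, ∀ c ∈ C, (adA c)^[p + 1] (a p) = 0)
    (m : ℕ → M) (hm : ∀ p : ℕ, ∀ c ∈ C, (adM c)^[p + 1] (m p) = 0)
    (p : ℕ) :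
    (∀ c ∈ C,
        (adM c)^[p + 1] (∑ i ∈ Finset.range (p + 1), a i • m (p - i)) = 0) ∧
    (∀ c ∈ C,
        (adM c)^[p + 1]
          (∑ i ∈ Finset.range (p + 1), MulOpposite.op (a i) • m (p - i)) = 0) := by
  constructor
  all_goals
    intro c hc
    refine Finset.sum_induction _ (fun x => (adM c)^[p + 1] x = 0)
      (fun x y hx hy => by rw [← coe_adMHom, iterate_map_add, coe_adMHom, hx, hy, add_zero])
      (by rw [← coe_adMHom, iterate_map_zero]) fun i hi => ?_
    have hip : i + (p - i) = p := Nat.add_sub_cancel' (Finset.mem_range_succ_iff.mp hi)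
  · simpa only [hip] using iterate_adM_smul_eq_zero (ha i c hc) (hm (p - i) c hc)
  · simpa only [hip] using iterate_adM_op_smul_eq_zero (ha i c hc) (hm (p - i) c hc)

theorem rees_deformation_sub_bimodule (C : Subalgebra R A)
    (hC : ∀ x ∈ C, ∀ y ∈ C, x * y = y * x)
    (hmax : ∀ a : A, (∀ c ∈ C, c * a = a * c) → a ∈ C)
    (a : ℕ → A) (ha : ∀ p : ℕ, ∀ c ∈ C, (adA c)^[p + 1] (a p) = 0)
    (m : ℕ → M) (hm : ∀ p : ℕ, ∀ c ∈ C, (adM c)^[p + 1] (m p) = 0)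
    (p : ℕ) :
    (∀ c ∈ C,
        (adM c)^[p + 1] (∑ i ∈ Finset.range (p + 1), a i • m (p - i)) = 0) ∧
    (∀ c ∈ C,
        (adM c)^[p + 1]
          (∑ i ∈ Finset.range (p + 1), MulOpposite.op (a i) • m (p - i)) = 0) :=
  rees_deformation_sub_bimodule_general C a ha m hm p
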